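/- arXiv:2006.01426 — 2 statements merged into one kernel-verified Lean document; each statement's English description precedes it below -/
import Mathlib

section
/- Let (a_j)_{j≥1} be a positive non-decreasing sequence of reals and let m ≤ n be positive integers. Then (a_{n+1} + ⋯ + a_{n+m}) / (a_1 + ⋯ + a_n) ≥ (min over j ≤ n of a_{j+m}/a_j) · (m/n). -/
/-!
Write `n = k + m`. Since `a` is non-decreasing, the last `m` of the terms `a_1, …, a_n` have at
least the average of all `n`, so `m · (a_1 + ⋯ + a_n) ≤ n · (a_{k+1} + ⋯ + a_n)`. Shifting the
index by `m` turns `a_{k+1} + ⋯ + a_n` into the numerator `a_{n+1} + ⋯ + a_{n+m}`, and termwise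
`a_{j+m} ≥ c · a_j` with `c` the minimal ratio.
-/

open Finset

theorem Finset.sum_Icc_comp_add_right {M : Type*} [AddCommMonoid M] (f : ℕ → M) (p q m : ℕ) :
    ∑ j ∈ Icc p q, f (j + m) = ∑ j ∈ Icc (p + m) (q + m), f j := by
  rw [← map_add_right_Icc, sum_map]
  rfl

theorem Finset.mul_sum_le_sum_of_le_div {ι K : Type*} [Field K] [LinearOrder K]
    [IsStrictOrderedRing K] {s : Finset ι} {f g : ι → K} {c : K} (hg : ∀ i ∈ s, 0 < g i)
    (hc : ∀ i ∈ s, c ≤ f i / g i) : c * ∑ i ∈ s, g i ≤ ∑ i ∈ s, f i := by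
  rw [mul_sum]
  exact sum_le_sum fun i hi => (le_div_iff₀ (hg i hi)).mp (hc i hi)

theorem Monotone.mul_sum_Icc_le_mul_sum_tail {a : ℕ → ℝ} (ha : Monotone a) (k m : ℕ) :
    (m : ℝ) * ∑ j ∈ Icc 1 (k + m), a j ≤ ((k + m : ℕ) : ℝ) * ∑ j ∈ Icc (k + 1) (k + m), a j := by
  have hsplit : ∑ j ∈ Icc 1 (k + m), a j
      = ∑ j ∈ Icc 1 k, a j + ∑ j ∈ Icc (k + 1) (k + m), a j := by
    rw [Icc_add_one_left_eq_Ioc]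
    exact (sum_Ioc_consecutive a k.zero_le (k.le_add_right m)).symm
  have hhead : ∑ j ∈ Icc 1 k, a j ≤ k * a (k + 1) := by
    simpa [nsmul_eq_mul] using
      sum_le_card_nsmul (Icc 1 k) a (a (k + 1)) fun j hj => ha (by grind)
  have htail : m * a (k + 1) ≤ ∑ j ∈ Icc (k + 1) (k + m), a j := by
    simpa [nsmul_eq_mul] using
      card_nsmul_le_sum (Icc (k + 1) (k + m)) a (a (k + 1)) fun j hj => ha (by grind)
  rw [hsplit]
  push_cast
  nlinarith [mul_le_mul_of_nonneg_left hhead m.cast_nonneg,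
    mul_le_mul_of_nonneg_left htail k.cast_nonneg]

/-- For a positive non-decreasing sequence `a` and `1 ≤ m ≤ n`,
`(a_{n+1}+⋯+a_{n+m})/(a_1+⋯+a_n) ≥ (min_{1≤j≤n} a_{j+m}/a_j) · (m/n)`. -/
theorem stmt1 (a : ℕ → ℝ) (hpos : ∀ j, 0 < a j) (hmono : ∀ j, a j ≤ a (j + 1))
    (m n : ℕ) (hm : 1 ≤ m) (hmn : m ≤ n) :
    (∑ j ∈ Finset.Icc (n + 1) (n + m), a j) / (∑ j ∈ Finset.Icc 1 n, a j) ≥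
      ((Finset.Icc 1 n).inf' ⟨1, Finset.mem_Icc.mpr ⟨le_refl 1, hm.trans hmn⟩⟩
          (fun j => a (j + m) / a j)) * ((m : ℝ) / (n : ℝ)) := by
  obtain ⟨k, rfl⟩ := Nat.exists_eq_add_of_le' hmn
  set c := (Icc 1 (k + m)).inf' ⟨1, mem_Icc.mpr ⟨le_refl 1, hm.trans hmn⟩⟩
    (fun j => a (j + m) / a j)
  have hc_nonneg : 0 ≤ c := le_inf' _ _ fun j _ => div_nonneg (hpos _).le (hpos _).le
  have hsum : 0 < ∑ j ∈ Icc 1 (k + m), a j :=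
    sum_pos (fun j _ => hpos j) (nonempty_Icc.mpr (by omega))
  have hratio : c * ∑ j ∈ Icc (k + 1) (k + m), a j ≤ ∑ j ∈ Icc (k + 1) (k + m), a (j + m) :=
    mul_sum_le_sum_of_le_div (fun j _ => hpos j) fun j hj => inf'_le _ (by grind)
  rw [ge_iff_le, le_div_iff₀ hsum]
  calc c * (m / (k + m : ℕ)) * ∑ j ∈ Icc 1 (k + m), a j
      = c * ((m * ∑ j ∈ Icc 1 (k + m), a j) / (k + m : ℕ)) := by ring
    _ ≤ c * ∑ j ∈ Icc (k + 1) (k + m), a j := by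
      gcongr
      rw [div_le_iff₀ (by positivity), mul_comm _ ((k + m : ℕ) : ℝ)]
      exact (monotone_nat_of_le_succ hmono).mul_sum_Icc_le_mul_sum_tail k m
    _ ≤ ∑ j ∈ Icc (k + 1) (k + m), a (j + m) := hratio
    _ = _ := by rw [sum_Icc_comp_add_right, add_right_comm]
end

section
/- (Comparison of Dirichlet forms, upper bound direction) Let G=(V,E) be a finite graph with maximum degree d_max, p ∈ (0,1/2], Ω₊ = {0,1}^V∖{0}, μ the Bernoulli(p) product measure conditioned on Ω₊. Let D(f) be the CBSEP Dirichlet form and D^FA(f) = Σ_x E_μ[𝟙{Σ_{y∼x}ω_y ≥ 1}·p(1-p)·(f(ω^x)-f(ω))²] the FA-1f Dirichlet form. Then there is an absolute constant c > 0 with c^{-1}·D^FA(f) ≤ D(f) for every f : Ω₊ → ℝ. -/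
open Finset

variable {V : Type*} [Fintype V] [DecidableEq V]

/-- Number of particles of a configuration. -/
def Np (ω : V → Bool) : ℕ := (Finset.univ.filter (fun x => ω x = true)).card

/-- Configurations with at least one particle. -/
def OmegaPlus (V : Type*) [Fintype V] [DecidableEq V] : Finset (V → Bool) :=
  Finset.univ.filter (fun ω => 0 < Np ω)

/-- Bernoulli(p) product weight. -/
def bern (p : ℝ) (ω : V → Bool) : ℝ := ∏ x, if ω x = true then p else 1 - p

/-- The measure `π` conditioned on at least one particle (weight on `OmegaPlus`). -/
noncomputable def mu (p : ℝ) (ω : V → Bool) : ℝ := bern p ω / (1 - (1 - p) ^ Fintype.card V)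

/-- Fill vertex `x` with a particle. -/
def fill (ω : V → Bool) (x : V) : V → Bool := Function.update ω x true

/-- Flip the state at vertex `x`. -/
def flipAt (ω : V → Bool) (x : V) : V → Bool := Function.update ω x (!ω x)

/-- Variance of `f` under resampling the states at `x, y` from `π_x ⊗ π_y`
conditioned on the edge being non-empty. -/
noncomputable def edgeVar (p : ℝ) (f : (V → Bool) → ℝ) (x y : V) (ω : V → Bool) : ℝ :=
  let u : Bool → Bool → ℝ := fun a b => f (Function.update (Function.update ω x a) y b)
  let m : ℝ := ((1 - p) / (2 - p)) * u true false + ((1 - p) / (2 - p)) * u false true +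
      (p / (2 - p)) * u true true
  ((1 - p) / (2 - p)) * (u true false - m) ^ 2 + ((1 - p) / (2 - p)) * (u false true - m) ^ 2 +
    (p / (2 - p)) * (u true true - m) ^ 2

/-- The CBSEP Dirichlet form `D(f) = Σ_{e∈E} μ(𝟙_{E_e} Var_e(f | E_e))`,
written as half the sum over oriented edges. -/
noncomputable def dirichlet (G : SimpleGraph V) [DecidableRel G.Adj] (p : ℝ)
    (f : (V → Bool) → ℝ) : ℝ :=
  (1 / 2) * ∑ x, ∑ y ∈ G.neighborFinset x,
    ∑ ω ∈ (OmegaPlus V).filter (fun ω => ω x = true ∨ ω y = true), mu p ω * edgeVar p f x y ω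

/-! With a neighbour `y` of `x` occupied, flipping `x` moves between the edge states `(1,1)` and
`(0,1)` of `{x, y}`, which the edge resampling charges with weights `p/(2-p)` and `(1-p)/(2-p)`.
Writing the three-point variance as a sum over pairs of states, `Var_{xy}(f)` is at least the
product of these weights, hence at least `p(1-p)/4`, times `(f(ω^x) - f(ω))²`. A union bound over
the occupied neighbours of `x` then gives `D^FA(f) ≤ 8 D(f)`. -/

open Function

lemma mu_nonneg {ι : Type*} [Fintype ι] {p : ℝ} (hp0 : 0 ≤ p) (hp1 : p ≤ 1) (ω : ι → Bool) :
    0 ≤ mu p ω := by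
  unfold mu bern
  have : (1 - p) ^ Fintype.card ι ≤ 1 := pow_le_one₀ (by linarith) (by linarith)
  exact div_nonneg (prod_nonneg fun x _ => by split <;> linarith) (by linarith)

theorem three_point_variance_eq {α β γ a b c : ℝ} (h : α + β + γ = 1) :
    α * (a - (α * a + β * b + γ * c)) ^ 2 + β * (b - (α * a + β * b + γ * c)) ^ 2 +
        γ * (c - (α * a + β * b + γ * c)) ^ 2 =
      α * β * (a - b) ^ 2 + α * γ * (a - c) ^ 2 + β * γ * (b - c) ^ 2 := by
  obtain rfl : γ = 1 - α - β := by linarith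
  ring

theorem sum_filter_exists_le_sum_sum_filter {α ι M : Type*} [AddCommMonoid M] [PartialOrder M]
    [IsOrderedAddMonoid M] (s : Finset α) (t : Finset ι) (P : ι → α → Prop)
    [∀ i, DecidablePred (P i)] {g : α → M} (hg : ∀ a ∈ s, 0 ≤ g a) :
    ∑ a ∈ s.filter (fun a => ∃ i ∈ t, P i a), g a ≤ ∑ i ∈ t, ∑ a ∈ s.filter (P i), g a := by
  simp only [sum_filter]
  rw [sum_comm]
  refine sum_le_sum fun a ha => ?_
  have hterm : ∀ i ∈ t, 0 ≤ if P i a then g a else 0 := fun i _ => by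
    split_ifs
    exacts [hg a ha, le_rfl]
  split_ifs with h
  · obtain ⟨i, hi, hPi⟩ := h
    simpa only [if_pos hPi] using single_le_sum hterm hi
  · exact sum_nonneg hterm

section EdgeVariance

variable {ι : Type*} [DecidableEq ι] {p : ℝ}

lemma mul_sq_sub_le_edgeVar (hp0 : 0 ≤ p) (hp1 : p ≤ 1) (f : (ι → Bool) → ℝ) (x y : ι)
    (ω : ι → Bool) :
    p * (1 - p) / 4 * (f (update (update ω x false) y true) -
        f (update (update ω x true) y true)) ^ 2 ≤ edgeVar p f x y ω := by
  have h2p : (0 : ℝ) < 2 - p := by linarith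
  have hw : 0 ≤ (1 - p) / (2 - p) := div_nonneg (by linarith) h2p.le
  have hv : 0 ≤ p / (2 - p) := div_nonneg hp0 h2p.le
  have hsum : (1 - p) / (2 - p) + (1 - p) / (2 - p) + p / (2 - p) = 1 := by
    field_simp
    ring
  have hwv : p * (1 - p) / 4 ≤ (1 - p) / (2 - p) * (p / (2 - p)) := by
    rw [div_mul_div_comm, div_le_div_iff₀ (by norm_num) (by positivity)]
    nlinarith [mul_nonneg hp0 (sub_nonneg.mpr hp1)]
  rw [edgeVar, three_point_variance_eq hsum]
  set a := f (update (update ω x true) y false)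
  set b := f (update (update ω x false) y true)
  set c := f (update (update ω x true) y true)
  have hab := mul_nonneg (mul_nonneg hw hw) (sq_nonneg (a - b))
  have hac := mul_nonneg (mul_nonneg hw hv) (sq_nonneg (a - c))
  have hbc := mul_le_mul_of_nonneg_right hwv (sq_nonneg (b - c))
  linarith

lemma edgeVar_nonneg (hp0 : 0 ≤ p) (hp1 : p ≤ 1) (f : (ι → Bool) → ℝ) (x y : ι)
    (ω : ι → Bool) : 0 ≤ edgeVar p f x y ω :=
  le_trans (mul_nonneg (div_nonneg (mul_nonneg hp0 (sub_nonneg.mpr hp1)) (by norm_num))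
    (sq_nonneg _)) (mul_sq_sub_le_edgeVar hp0 hp1 f x y ω)

lemma sq_sub_flipAt_eq (f : (ι → Bool) → ℝ) (ω : ι → Bool) (x : ι) :
    (f (flipAt ω x) - f ω) ^ 2 = (f (update ω x false) - f (update ω x true)) ^ 2 := by
  have hω : ∀ b, ω x = b → update ω x b = ω := fun b hb => update_eq_self_iff.mpr hb.symm
  cases hx : ω x
  · rw [flipAt, hx, Bool.not_false, hω false hx]
    ring
  · rw [flipAt, hx, Bool.not_true, hω true hx]

lemma flip_sq_le_four_mul_edgeVar (hp0 : 0 ≤ p) (hp1 : p ≤ 1) (f : (ι → Bool) → ℝ)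
    {x y : ι} (hxy : x ≠ y) {ω : ι → Bool} (hy : ω y = true) :
    p * (1 - p) * (f (flipAt ω x) - f ω) ^ 2 ≤ 4 * edgeVar p f x y ω := by
  have hfill : ∀ a : Bool, update (update ω x a) y true = update ω x a := fun a => by
    rw [update_eq_self_iff, update_of_ne hxy.symm, hy]
  have h := mul_sq_sub_le_edgeVar hp0 hp1 f x y ω
  rw [hfill, hfill, ← sq_sub_flipAt_eq] at h
  linarith

lemma sum_flip_le_four_mul_sum_edgeVar (hp0 : 0 ≤ p) (hp1 : p ≤ 1) (S : Finset (ι → Bool))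
    {ν : (ι → Bool) → ℝ} (hν : ∀ ω, 0 ≤ ν ω) (f : (ι → Bool) → ℝ) {x y : ι} (hxy : x ≠ y) :
    ∑ ω ∈ S.filter (fun ω => ω y = true), ν ω * (p * (1 - p) * (f (flipAt ω x) - f ω) ^ 2) ≤
      4 * ∑ ω ∈ S.filter (fun ω => ω x = true ∨ ω y = true), ν ω * edgeVar p f x y ω := by
  rw [mul_sum]
  calc _ ≤ ∑ ω ∈ S.filter (fun ω => ω y = true), 4 * (ν ω * edgeVar p f x y ω) := by
        refine sum_le_sum fun ω hω => ?_
        have h := flip_sq_le_four_mul_edgeVar hp0 hp1 f hxy (mem_filter.mp hω).2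
        rw [mul_left_comm (4 : ℝ)]
        exact mul_le_mul_of_nonneg_left h (hν ω)
    _ ≤ _ := by
        refine sum_le_sum_of_subset_of_nonneg (monotone_filter_right S fun ω _ => Or.inr) ?_
        exact fun ω _ _ =>
          mul_nonneg (by norm_num) (mul_nonneg (hν ω) (edgeVar_nonneg hp0 hp1 f x y ω))

end EdgeVariance

/-- There is an absolute constant `c > 0` such that `c⁻¹·D^FA(f) ≤ D(f)` for every graph
with `p ∈ (0,1/2]` and every `f`, where `D^FA` is the FA-1f Dirichlet form. -/
theorem stmt11 : ∃ c : ℝ, 0 < c ∧ ∀ (W : Type) [Fintype W] [DecidableEq W]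
    (G : SimpleGraph W) [DecidableRel G.Adj] (p : ℝ), 0 < p → p ≤ 1 / 2 →
    ∀ f : (W → Bool) → ℝ,
      c⁻¹ * (∑ x, ∑ ω ∈ (OmegaPlus W).filter
            (fun ω => ∃ y ∈ G.neighborFinset x, ω y = true),
          mu p ω * (p * (1 - p) * (f (flipAt ω x) - f ω) ^ 2)) ≤
        dirichlet G p f := by
  refine ⟨8, by norm_num, fun W _ _ G _ p hp0 hp12 f => ?_⟩
  have hp1 : p ≤ 1 := by linarith
  have hμ := mu_nonneg (ι := W) hp0.le hp1
  have hsite : ∀ x, ∑ ω ∈ (OmegaPlus W).filter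
        (fun ω => ∃ y ∈ G.neighborFinset x, ω y = true),
        mu p ω * (p * (1 - p) * (f (flipAt ω x) - f ω) ^ 2) ≤
      4 * ∑ y ∈ G.neighborFinset x,
        ∑ ω ∈ (OmegaPlus W).filter (fun ω => ω x = true ∨ ω y = true),
          mu p ω * edgeVar p f x y ω := fun x => by
    refine (sum_filter_exists_le_sum_sum_filter _ _ _ fun ω _ =>
      mul_nonneg (hμ ω) (mul_nonneg (mul_nonneg hp0.le (by linarith)) (sq_nonneg _))).trans ?_
    rw [mul_sum]
    exact sum_le_sum fun y hy =>
      sum_flip_le_four_mul_sum_edgeVar hp0.le hp1 _ hμ f (G.ne_of_adj (by simpa using hy))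
  have htotal := sum_le_sum fun x (_ : x ∈ univ) => hsite x
  rw [← mul_sum] at htotal
  rw [dirichlet]
  linarith
end
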